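/- arXiv:2207.03974 — 2 statements merged into one kernel-verified Lean document; each statement's English description precedes it below -/
import Mathlib

section
/- Let P be a poset with legs and let F ⊆ 2^{[n]} be an induced P-saturated family. Then there is an injective function f: [n] → F \ {∅} such that f(i) = {i} whenever {i} ∈ F, and otherwise f(i) is the hip of some induced copy of P in F ∪ {{i}}. -/
/-- `φ` is an induced-copy map of the poset `P` into the family `F`
(posets are finite collections of finite subsets of `ℕ`, ordered by inclusion). -/
def IsCopyMap (P F : Finset (Finset ℕ)) (φ : Finset ℕ → Finset ℕ) : Prop :=
  Set.InjOn φ ↑P ∧ (∀ A ∈ P, φ A ∈ F) ∧ ∀ A ∈ P, ∀ B ∈ P, (φ A ⊆ φ B ↔ A ⊆ B)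

/-- `F` contains an induced copy of the poset `P`. -/
def ContainsInduced (P F : Finset (Finset ℕ)) : Prop := ∃ φ, IsCopyMap P F φ

/-- `F ⊆ 2^[n]` is induced `P`-saturated. -/
def InducedSaturated (n : ℕ) (P F : Finset (Finset ℕ)) : Prop :=
  (∀ A ∈ F, A ⊆ Finset.Icc 1 n) ∧ ¬ ContainsInduced P F ∧
  ∀ S ⊆ Finset.Icc 1 n, S ∉ F → ContainsInduced P (insert S F)

/-- `P` has legs `L1, L2` and hip `H`. -/
def LegsAt (P : Finset (Finset ℕ)) (L1 L2 H : Finset ℕ) : Prop :=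
  L1 ∈ P ∧ L2 ∈ P ∧ H ∈ P ∧ L1 ≠ L2 ∧ L1 ≠ H ∧ L2 ≠ H ∧
  ¬ L1 ⊆ L2 ∧ ¬ L2 ⊆ L1 ∧ L1 ⊆ H ∧ L2 ⊆ H ∧
  ∀ A ∈ P, A ≠ L1 → A ≠ L2 → A ≠ H → H ⊆ A

/-- `P` has legs. -/
def HasLegs (P : Finset (Finset ℕ)) : Prop := ∃ L1 L2 H, LegsAt P L1 L2 H

/-- `sat*(n, P)`: the minimum size of an induced `P`-saturated family in `2^[n]`. -/
noncomputable def satStar (n : ℕ) (P : Finset (Finset ℕ)) : ℕ :=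
  sInf {k | ∃ F : Finset (Finset ℕ), InducedSaturated n P F ∧ F.card = k}

/-!
If `{i} ∉ F`, saturation gives a copy of `P` in `F ∪ {{i}}`. As `F` is `P`-free the copy
uses `{i}`, and only as a leg, because `{i}` contains no two incomparable sets.
The key observation is that the legs and the hip of a copy can be moved down freely: if `X`
is the hip of a copy whose elements above the hip lie in `F`, then any wedge `u, v ⊂ x ⊆ X`
(`u, v` incomparable) consists of the legs and the hip of another such copy. In particular
the members of `F` strictly below such an `X ∈ F` form a chain.

Call `X ∈ F` a tight hip for `i` if `X \ {i} ∈ F` and `{i}, X \ {i}` are the legs of a copy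
with hip `X` of this kind. Tight hips are found by climbing: if `{i}, M` (with `M ∈ F`) are
the legs of such a copy with hip `X ∈ F`, either `M ∪ {i} ∈ F` is a tight hip, or saturation
at `M ∪ {i}` makes `M ∪ {i}` a leg next to some `B ∈ F` (the chain below `X` rules out the
other positions), and the chain property below the new hip forces `M ⊂ B`. As `|M|` grows,
this stops. Sending `i` to a tight hip is injective: a common tight hip `X` of `a ≠ b` would
have the incomparable members `X \ {a}, X \ {b}` of `F` below it.
-/

structure IsWedge {α : Type*} (u v x : Finset α) : Prop where
  left_not_subset : ¬ u ⊆ v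
  right_not_subset : ¬ v ⊆ u
  left_ssubset : u ⊂ x
  right_ssubset : v ⊂ x

def IsOrderEmbOn (P : Finset (Finset ℕ)) (φ : Finset ℕ → Finset ℕ) : Prop :=
  ∀ A ∈ P, ∀ B ∈ P, φ A ⊆ φ B ↔ A ⊆ B

def IsHipWithTopsIn (P : Finset (Finset ℕ)) (H : Finset ℕ) (F : Finset (Finset ℕ))
    (X : Finset ℕ) : Prop :=
  ∃ φ, IsOrderEmbOn P φ ∧ φ H = X ∧ ∀ C ∈ P, H ⊂ C → φ C ∈ F

structure IsTightHip (P : Finset (Finset ℕ)) (H : Finset ℕ) (F : Finset (Finset ℕ)) (i : ℕ)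
    (X : Finset ℕ) : Prop where
  hip_mem : X ∈ F
  erase_mem : X.erase i ∈ F
  isHipWithTopsIn : IsHipWithTopsIn P H F X
  isWedge : IsWedge {i} (X.erase i) X

section

open Finset

namespace IsWedge

variable {α : Type*} {u v x y : Finset α}

theorem mono (h : IsWedge u v x) (hxy : x ⊆ y) : IsWedge u v y :=
  ⟨h.left_not_subset, h.right_not_subset, h.left_ssubset.trans_le hxy,
    h.right_ssubset.trans_le hxy⟩

theorem not_singleton {a : α} : ¬ IsWedge u v {a} := fun h =>
  h.left_not_subset (ssubset_singleton_iff.mp h.left_ssubset ▸ empty_subset v)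

end IsWedge

namespace IsOrderEmbOn

variable {P : Finset (Finset ℕ)} {φ : Finset ℕ → Finset ℕ}

theorem ssubset_iff (hφ : IsOrderEmbOn P φ) {A B : Finset ℕ} (hA : A ∈ P) (hB : B ∈ P) :
    φ A ⊂ φ B ↔ A ⊂ B := by
  simp only [ssubset_def, hφ A hA B hB, hφ B hB A hA]

theorem isWedge {A B C : Finset ℕ} (hφ : IsOrderEmbOn P φ) (h : IsWedge A B C) (hA : A ∈ P)
    (hB : B ∈ P) (hC : C ∈ P) : IsWedge (φ A) (φ B) (φ C) :=
  ⟨(hφ _ hA _ hB).not.mpr h.left_not_subset, (hφ _ hB _ hA).not.mpr h.right_not_subset,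
    (hφ.ssubset_iff hA hC).mpr h.left_ssubset, (hφ.ssubset_iff hB hC).mpr h.right_ssubset⟩

theorem injOn (hφ : IsOrderEmbOn P φ) : Set.InjOn φ ↑P := fun A hA B hB h =>
  Subset.antisymm ((hφ A hA B hB).mp h.le) ((hφ B hB A hA).mp h.ge)

end IsOrderEmbOn

theorem isCopyMap_iff {P F : Finset (Finset ℕ)} {φ : Finset ℕ → Finset ℕ} :
    IsCopyMap P F φ ↔ IsOrderEmbOn P φ ∧ ∀ A ∈ P, φ A ∈ F :=
  ⟨fun h => ⟨h.2.2, h.2.1⟩, fun h => ⟨h.1.injOn, h.2, h.1⟩⟩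

theorem IsCopyMap.mem_of_ne {P F : Finset (Finset ℕ)} {S A B : Finset ℕ}
    {φ : Finset ℕ → Finset ℕ} (hφ : IsCopyMap P (insert S F) φ) (hA : A ∈ P)
    (hB : B ∈ P) (hBS : φ B = S) (hAB : A ≠ B) : φ A ∈ F :=
  (mem_insert.mp (hφ.2.1 A hA)).resolve_left fun h => hAB (hφ.1 hA hB (h.trans hBS.symm))

namespace LegsAt

variable {P : Finset (Finset ℕ)} {L1 L2 H : Finset ℕ}

theorem symm (h : LegsAt P L1 L2 H) : LegsAt P L2 L1 H := by
  obtain ⟨h1P, h2P, hHP, h12, h1H, h2H, n12, n21, s1, s2, hmin⟩ := h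
  exact ⟨h2P, h1P, hHP, h12.symm, h2H, h1H, n21, n12, s2, s1,
    fun A hA a2 a1 => hmin A hA a1 a2⟩

theorem isWedge (h : LegsAt P L1 L2 H) : IsWedge L1 L2 H := by
  obtain ⟨-, -, -, -, h1H, h2H, n12, n21, s1, s2, -⟩ := h
  exact ⟨n12, n21, s1.lt_of_ne h1H, s2.lt_of_ne h2H⟩

theorem mem_cases (h : LegsAt P L1 L2 H) {A : Finset ℕ} (hA : A ∈ P) :
    A = L1 ∨ A = L2 ∨ A = H ∨ H ⊂ A := by
  obtain ⟨-, -, -, -, -, -, -, -, -, -, hmin⟩ := h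
  by_cases h1 : A = L1; · exact Or.inl h1
  by_cases h2 : A = L2; · exact Or.inr (Or.inl h2)
  by_cases hH : A = H; · exact Or.inr (Or.inr (Or.inl hH))
  exact Or.inr (Or.inr (Or.inr ((hmin A hA h1 h2 hH).lt_of_ne (Ne.symm hH))))

theorem isOrderEmbOn_of_isWedge (h : LegsAt P L1 L2 H) {χ : Finset ℕ → Finset ℕ}
    (hw : IsWedge (χ L1) (χ L2) (χ H)) (hH : ∀ C ∈ P, H ⊂ C → χ H ⊂ χ C)
    (htops : ∀ C ∈ P, H ⊂ C → ∀ D ∈ P, H ⊂ D → (χ C ⊆ χ D ↔ C ⊆ D)) :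
    IsOrderEmbOn P χ := by
  obtain ⟨_, _, _, _⟩ := hw
  obtain ⟨_, _, _, _⟩ := h.isWedge
  intro A hA B hB
  -- Outside the case of two tops, both sides hold or both fail, by transitivity through the
  -- two wedges and `χ H ⊂ χ C`.
  rcases h.mem_cases hA with rfl | rfl | rfl | hHA <;>
    rcases h.mem_cases hB with rfl | rfl | rfl | hHB <;>
    first
    | exact htops A hA hHA B hB hHB
    | (try have := hH A hA hHA); (try have := hH B hB hHB); constructor <;> intro <;> order

end LegsAt

variable {P F : Finset (Finset ℕ)} {L1 L2 H : Finset ℕ}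

theorem IsHipWithTopsIn.exists_orderEmbOn (hlegs : LegsAt P L1 L2 H) {X u v x : Finset ℕ}
    (hT : IsHipWithTopsIn P H F X) (hw : IsWedge u v x) (hxX : x ⊆ X) :
    ∃ χ, IsOrderEmbOn P χ ∧ χ L1 = u ∧ χ L2 = v ∧ χ H = x ∧ ∀ C ∈ P, H ⊂ C → χ C ∈ F := by
  classical
  obtain ⟨φ, hφ, hφH, htops⟩ := hT
  have ⟨_, _, hHP, h12, _⟩ := hlegs
  obtain ⟨-, -, hL1, hL2⟩ := hlegs.isWedge
  let χ A := if A = L1 then u else if A = L2 then v else if A = H then x else φ A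
  have hχ1 : χ L1 = u := if_pos rfl
  have hχ2 : χ L2 = v := by simp [χ, h12.symm]
  have hχH : χ H = x := by simp [χ, hL1.ne', hL2.ne']
  have hχC : ∀ C, H ⊂ C → χ C = φ C := fun C hC => by
    simp [χ, (hL1.trans hC).ne', (hL2.trans hC).ne', hC.ne']
  refine ⟨χ, hlegs.isOrderEmbOn_of_isWedge ?_ ?_ ?_, hχ1, hχ2, hχH,
    fun C hC hHC => hχC C hHC ▸ htops C hC hHC⟩
  · rwa [hχ1, hχ2, hχH]
  · intro C hC hHC
    rw [hχH, hχC C hHC]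
    exact hxX.trans_lt (hφH ▸ (hφ.ssubset_iff hHP hC).mpr hHC)
  · intro C hC hHC D hD hHD
    rw [hχC C hHC, hχC D hHD]
    exact hφ C hC D hD

theorem IsHipWithTopsIn.mono (hlegs : LegsAt P L1 L2 H) {X x u v : Finset ℕ}
    (hT : IsHipWithTopsIn P H F X) (hw : IsWedge u v x) (hxX : x ⊆ X) :
    IsHipWithTopsIn P H F x := by
  obtain ⟨χ, hχ, -, -, hχH, htops⟩ := hT.exists_orderEmbOn hlegs hw hxX
  exact ⟨χ, hχ, hχH, htops⟩

theorem IsHipWithTopsIn.exists_isCopyMap (hlegs : LegsAt P L1 L2 H) {G : Finset (Finset ℕ)}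
    {X u v x : Finset ℕ} (hT : IsHipWithTopsIn P H F X) (hFG : F ⊆ G) (hu : u ∈ G)
    (hv : v ∈ G) (hx : x ∈ G) (hw : IsWedge u v x) (hxX : x ⊆ X) :
    ∃ χ, IsCopyMap P G χ ∧ χ H = x := by
  obtain ⟨χ, hχ, hχ1, hχ2, hχH, htops⟩ := hT.exists_orderEmbOn hlegs hw hxX
  refine ⟨χ, isCopyMap_iff.mpr ⟨hχ, fun A hA => ?_⟩, hχH⟩
  rcases hlegs.mem_cases hA with rfl | rfl | rfl | hHA
  exacts [hχ1 ▸ hu, hχ2 ▸ hv, hχH ▸ hx, hFG (htops A hA hHA)]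

theorem IsHipWithTopsIn.not_isWedge (hlegs : LegsAt P L1 L2 H)
    (hfree : ¬ ContainsInduced P F) {X Y Z : Finset ℕ} (hT : IsHipWithTopsIn P H F X)
    (hX : X ∈ F) (hY : Y ∈ F) (hZ : Z ∈ F) : ¬ IsWedge Y Z X := fun hw =>
  hfree ((hT.exists_isCopyMap hlegs subset_rfl hY hZ hX hw subset_rfl).imp fun _ => And.left)

theorem IsCopyMap.exists_isWedge_of_leg (hlegs : LegsAt P L1 L2 H) {S : Finset ℕ}
    {φ : Finset ℕ → Finset ℕ} (hφ : IsCopyMap P (insert S F) φ) (hS : φ L1 = S) :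
    ∃ B ∈ F, ∃ W ∈ F, IsWedge S B W ∧ IsHipWithTopsIn P H F W := by
  have ⟨h1P, h2P, hHP, h12, _⟩ := hlegs
  obtain ⟨-, -, hL1, -⟩ := hlegs.isWedge
  have hφ' := (isCopyMap_iff.mp hφ).1
  exact ⟨φ L2, hφ.mem_of_ne h2P h1P hS h12.symm, φ H, hφ.mem_of_ne hHP h1P hS hL1.ne',
    hS ▸ hφ'.isWedge hlegs.isWedge h1P h2P hHP,
    φ, hφ', rfl, fun C hC hHC => hφ.mem_of_ne hC h1P hS (hL1.trans hHC).ne'⟩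

/-- A copy of `P` in `insert S F` must use `S`: either as a leg, or at or above the hip. -/
theorem IsCopyMap.exists_isWedge (hlegs : LegsAt P L1 L2 H) (hfree : ¬ ContainsInduced P F)
    {S : Finset ℕ} {φ : Finset ℕ → Finset ℕ} (hφ : IsCopyMap P (insert S F) φ) :
    (∃ B ∈ F, ∃ W ∈ F, IsWedge S B W ∧ IsHipWithTopsIn P H F W) ∨
      ∃ U ∈ F, ∃ V ∈ F, IsWedge U V S := by
  obtain ⟨A, hA, hAS⟩ : ∃ A ∈ P, φ A = S := by
    by_contra! h
    exact hfree ⟨φ, hφ.1,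
      fun A hA => (mem_insert.mp (hφ.2.1 A hA)).resolve_left (h A hA), hφ.2.2⟩
  have ⟨h1P, h2P, hHP, _⟩ := hlegs
  obtain ⟨-, -, hL1, hL2⟩ := hlegs.isWedge
  rcases hlegs.mem_cases hA with rfl | rfl | hHA'
  · exact Or.inl (hφ.exists_isWedge_of_leg hlegs hAS)
  · exact Or.inl (hφ.exists_isWedge_of_leg hlegs.symm hAS)
  · have hHA : H ⊆ A := hHA'.elim (fun h => h.ge) (fun h => h.le)
    have hφ' := (isCopyMap_iff.mp hφ).1
    refine Or.inr ⟨φ L1, hφ.mem_of_ne h1P hA hAS (hL1.trans_le hHA).ne,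
      φ L2, hφ.mem_of_ne h2P hA hAS (hL2.trans_le hHA).ne, ?_⟩
    exact (hφ'.isWedge hlegs.isWedge h1P h2P hHP).mono (hAS ▸ (hφ' H hHP A hA).mpr hHA)

variable {n i : ℕ}

theorem exists_isTightHip_or_isWedge (hlegs : LegsAt P L1 L2 H) (hF : InducedSaturated n P F)
    {X M : Finset ℕ} (hX : X ∈ F) (hM : M ∈ F) (hT : IsHipWithTopsIn P H F X)
    (hw : IsWedge {i} M X) :
    IsTightHip P H F i (insert i M) ∨
      ∃ W ∈ F, ∃ B ∈ F, IsHipWithTopsIn P H F W ∧ IsWedge {i} B W ∧ M ⊂ B := by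
  have hiM : i ∉ M := fun h => hw.left_not_subset (singleton_subset_iff.mpr h)
  have hiX : {i} ⊆ insert i M := singleton_subset_iff.mpr (mem_insert_self i M)
  have hSX : insert i M ⊆ X :=
    insert_subset (singleton_subset_iff.mp hw.left_ssubset.le) hw.right_ssubset.le
  have hwS : IsWedge {i} M (insert i M) := ⟨hw.left_not_subset, hw.right_not_subset,
    ssubset_def.mpr ⟨hiX, fun h => hw.right_not_subset ((subset_insert i M).trans h)⟩,
    ssubset_insert hiM⟩
  by_cases hSF : insert i M ∈ F
  · left
    refine ⟨hSF, ?_, hT.mono hlegs hwS hSX, ?_⟩ <;> rwa [erase_insert hiM]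
  right
  obtain ⟨ρ, hρ⟩ := hF.2.2 _ (hSX.trans (hF.1 X hX)) hSF
  rcases hρ.exists_isWedge hlegs hF.2.1 with
    ⟨B, hB, W, hW, hSBW, hTW⟩ | ⟨U, hU, V, hV, hUVS⟩
  · have hBM : ¬ B ⊆ M := fun h => hSBW.right_not_subset (h.trans (subset_insert i M))
    have hMB : M ⊆ B := by
      by_contra hMB
      exact hTW.not_isWedge hlegs hF.2.1 hW hM hB ⟨hMB, hBM,
        (subset_insert i M).trans_lt hSBW.left_ssubset, hSBW.right_ssubset⟩
    refine ⟨W, hW, B, hB, hTW, ⟨fun h => ?_, fun h => ?_, ?_, hSBW.right_ssubset⟩,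
      ssubset_def.mpr ⟨hMB, hBM⟩⟩
    · exact hSBW.left_not_subset (insert_subset (singleton_subset_iff.mp h) hMB)
    · exact hSBW.right_not_subset (h.trans hiX)
    · exact hwS.left_ssubset.trans hSBW.left_ssubset
  · exact (hT.not_isWedge hlegs hF.2.1 hX hU hV (hUVS.mono hSX)).elim

theorem exists_isTightHip_of_isWedge (hlegs : LegsAt P L1 L2 H) (hF : InducedSaturated n P F)
    {X M : Finset ℕ} (hX : X ∈ F) (hM : M ∈ F) (hT : IsHipWithTopsIn P H F X)
    (hw : IsWedge {i} M X) : ∃ Y, IsTightHip P H F i Y := by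
  rcases exists_isTightHip_or_isWedge hlegs hF hX hM hT hw with
    h | ⟨W, hW, B, hB, hTW, hwB, hMB⟩
  · exact ⟨_, h⟩
  · have : B.card ≤ n := by simpa using card_le_card (hF.1 B hB)
    have := card_lt_card hMB
    exact exists_isTightHip_of_isWedge hlegs hF hW hB hTW hwB
termination_by n - M.card

theorem exists_isTightHip (hlegs : LegsAt P L1 L2 H) (hF : InducedSaturated n P F)
    (hi : i ∈ Icc 1 n) (hiF : {i} ∉ F) : ∃ X, IsTightHip P H F i X := by
  obtain ⟨ρ, hρ⟩ := hF.2.2 {i} (singleton_subset_iff.mpr hi) hiF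
  rcases hρ.exists_isWedge hlegs hF.2.1 with ⟨B, hB, W, hW, hw, hTW⟩ | ⟨_, _, _, _, hw⟩
  · exact exists_isTightHip_of_isWedge hlegs hF hW hB hTW hw
  · exact (IsWedge.not_singleton hw).elim

namespace IsTightHip

variable {X : Finset ℕ}

theorem mem (h : IsTightHip P H F i X) : i ∈ X :=
  singleton_subset_iff.mp h.isWedge.left_ssubset.le

theorem exists_isCopyMap (hlegs : LegsAt P L1 L2 H) (h : IsTightHip P H F i X) :
    ∃ φ, IsCopyMap P (insert {i} F) φ ∧ φ H = X :=
  h.isHipWithTopsIn.exists_isCopyMap hlegs (subset_insert _ _) (mem_insert_self _ _)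
    (mem_insert_of_mem h.erase_mem) (mem_insert_of_mem h.hip_mem) h.isWedge subset_rfl

theorem unique (hlegs : LegsAt P L1 L2 H) (hfree : ¬ ContainsInduced P F) {a b : ℕ}
    (ha : IsTightHip P H F a X) (hb : IsTightHip P H F b X) : a = b := by
  by_contra hab
  refine ha.isHipWithTopsIn.not_isWedge hlegs hfree ha.hip_mem ha.erase_mem hb.erase_mem
    ⟨fun h => ?_, fun h => ?_, erase_ssubset ha.mem, erase_ssubset hb.mem⟩
  · exact notMem_erase b X (h (mem_erase_of_ne_of_mem (Ne.symm hab) hb.mem))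
  · exact notMem_erase a X (h (mem_erase_of_ne_of_mem hab ha.mem))

end IsTightHip

end

/-- If `P` is a poset with legs `L1, L2` and hip `H`, and `F ⊆ 2^[n]` is induced
`P`-saturated, then there is an injective `f : [n] → F \ {∅}` with `f i = {i}` whenever
`{i} ∈ F`, and otherwise `f i` is the hip of some induced copy of `P` in `F ∪ {{i}}`. -/
theorem legs_injection (P : Finset (Finset ℕ)) (L1 L2 H : Finset ℕ)
    (hlegs : LegsAt P L1 L2 H) (n : ℕ) (F : Finset (Finset ℕ))
    (hF : InducedSaturated n P F) :
    ∃ f : ℕ → Finset ℕ, Set.InjOn f ↑(Finset.Icc 1 n) ∧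
      ∀ i ∈ Finset.Icc 1 n, f i ∈ F ∧ f i ≠ ∅ ∧
        (({i} : Finset ℕ) ∈ F → f i = {i}) ∧
        (({i} : Finset ℕ) ∉ F →
          ∃ φ, IsCopyMap P (insert {i} F) φ ∧ f i = φ H) := by
  classical
  choose! g hg using fun i (hi : i ∈ Finset.Icc 1 n) (hiF : ({i} : Finset ℕ) ∉ F) =>
    exists_isTightHip hlegs hF hi hiF
  refine ⟨fun i => if {i} ∈ F then {i} else g i, fun a ha b hb hab => ?_, fun i hi => ?_⟩
  · dsimp only at hab
    split_ifs at hab with haF hbF hbF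
    · exact Finset.singleton_inj.mp hab
    · exact (Finset.mem_singleton.mp (hab ▸ (hg b hb hbF).mem)).symm
    · exact Finset.mem_singleton.mp (hab ▸ (hg a ha haF).mem)
    · exact (hg a ha haF).unique hlegs hF.2.1 (hab ▸ hg b hb hbF)
  · dsimp only
    by_cases hiF : {i} ∈ F
    · rw [if_pos hiF]
      exact ⟨hiF, Finset.singleton_ne_empty i, fun _ => rfl, absurd hiF⟩
    · obtain ⟨φ, hφ, hφH⟩ := (hg i hi hiF).exists_isCopyMap hlegs
      rw [if_neg hiF]
      exact ⟨(hg i hi hiF).hip_mem, Finset.ne_empty_of_mem (hg i hi hiF).mem, (absurd · hiF),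
        fun _ => ⟨φ, hφ, hφH.symm⟩⟩
end

section
/- For every n ≥ 3, sat*(n, X) = 2n + 2, where X is the 5-element poset with two incomparable minimal elements, a middle element, and two incomparable maximal elements. -/
/-- The poset `X`: two incomparable minimal elements below a middle element,
which lies below two incomparable maximal elements. -/
def posetX : Finset (Finset ℕ) := {{1}, {2}, {1, 2}, {1, 2, 3}, {1, 2, 4}}

open Finset

def IsXShape (l₁ l₂ h m₁ m₂ : Finset ℕ) : Prop :=
  IncompRel (· ⊆ ·) l₁ l₂ ∧ l₁ ⊆ h ∧ l₂ ⊆ h ∧ h ⊆ m₁ ∧ h ⊆ m₂ ∧ IncompRel (· ⊆ ·) m₁ m₂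

theorem mem_posetX {A : Finset ℕ} :
    A ∈ posetX ↔ A = {1} ∨ A = {2} ∨ A = {1, 2} ∨ A = {1, 2, 3} ∨ A = {1, 2, 4} := by
  simp [posetX]

theorem containsInduced_posetX_iff {F : Finset (Finset ℕ)} :
    ContainsInduced posetX F ↔
      ∃ l₁ ∈ F, ∃ l₂ ∈ F, ∃ h ∈ F, ∃ m₁ ∈ F, ∃ m₂ ∈ F, IsXShape l₁ l₂ h m₁ m₂ := by
  constructor
  · rintro ⟨φ, -, hφF, hφ⟩
    have h₁ : {1} ∈ posetX := by decide
    have h₂ : {2} ∈ posetX := by decide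
    have h₁₂ : {1, 2} ∈ posetX := by decide
    have h₃ : {1, 2, 3} ∈ posetX := by decide
    have h₄ : {1, 2, 4} ∈ posetX := by decide
    refine ⟨_, hφF _ h₁, _, hφF _ h₂, _, hφF _ h₁₂, _, hφF _ h₃, _, hφF _ h₄, ?_⟩
    simp only [IsXShape, IncompRel, hφ _ h₁ _ h₂, hφ _ h₂ _ h₁, hφ _ h₁ _ h₁₂, hφ _ h₂ _ h₁₂,
      hφ _ h₁₂ _ h₃, hφ _ h₁₂ _ h₄, hφ _ h₃ _ h₄, hφ _ h₄ _ h₃]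
    decide
  · rintro ⟨l₁, hl₁, l₂, hl₂, h, hh, m₁, hm₁, m₂, hm₂,
      ⟨h12, h21⟩, hl₁h, hl₂h, hhm₁, hhm₂, hm₁₂, hm₂₁⟩
    beta_reduce at h12 h21 hm₁₂ hm₂₁
    let φ : Finset ℕ → Finset ℕ := fun A =>
      if A = {1} then l₁ else if A = {2} then l₂ else if A = {1, 2} then h
      else if A = {1, 2, 3} then m₁ else m₂
    have hφ : ∀ A ∈ posetX, ∀ B ∈ posetX, (φ A ⊆ φ B ↔ A ⊆ B) := by
      intro A hA B hB
      rw [mem_posetX] at hA hB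
      rcases hA with rfl | rfl | rfl | rfl | rfl <;> rcases hB with rfl | rfl | rfl | rfl | rfl <;>
        simp +decide only [φ, if_true, if_false, iff_true, iff_false] <;>
        order
    refine ⟨φ, fun A hA B hB hAB => ?_, fun A hA => ?_, hφ⟩
    · exact subset_antisymm ((hφ A hA B hB).1 hAB.le) ((hφ B hB A hA).1 hAB.ge)
    · rw [mem_posetX] at hA
      rcases hA with rfl | rfl | rfl | rfl | rfl <;> simp +decide [φ, *]

theorem IsXShape.sdiff {s l₁ l₂ h m₁ m₂ : Finset ℕ} (hX : IsXShape l₁ l₂ h m₁ m₂)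
    (hm₁ : m₁ ⊆ s) (hm₂ : m₂ ⊆ s) :
    IsXShape (s \ m₁) (s \ m₂) (s \ h) (s \ l₁) (s \ l₂) := by
  obtain ⟨⟨h12, h21⟩, hl₁h, hl₂h, hhm₁, hhm₂, hm₁₂, hm₂₁⟩ := hX
  have hl₁ : l₁ ⊆ s := hl₁h.trans (hhm₁.trans hm₁)
  have hl₂ : l₂ ⊆ s := hl₂h.trans (hhm₁.trans hm₁)
  refine ⟨⟨?_, ?_⟩, sdiff_subset_sdiff_right s hhm₁, sdiff_subset_sdiff_right s hhm₂,
    sdiff_subset_sdiff_right s hl₁h, sdiff_subset_sdiff_right s hl₂h, ⟨?_, ?_⟩⟩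
  exacts [fun h => hm₂₁ ((sdiff_subset_sdiff_iff_subset hm₁ hm₂).1 h),
    fun h => hm₁₂ ((sdiff_subset_sdiff_iff_subset hm₂ hm₁).1 h),
    fun h => h21 ((sdiff_subset_sdiff_iff_subset hl₁ hl₂).1 h),
    fun h => h12 ((sdiff_subset_sdiff_iff_subset hl₂ hl₁).1 h)]

theorem ContainsInduced.image_sdiff {s : Finset ℕ} {F : Finset (Finset ℕ)}
    (hF : ∀ A ∈ F, A ⊆ s) (h : ContainsInduced posetX F) :
    ContainsInduced posetX (F.image (s \ ·)) := by
  obtain ⟨l₁, hl₁, l₂, hl₂, h, hh, m₁, hm₁, m₂, hm₂, hX⟩ := containsInduced_posetX_iff.1 h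
  exact containsInduced_posetX_iff.2 ⟨_, mem_image_of_mem _ hm₁, _, mem_image_of_mem _ hm₂,
    _, mem_image_of_mem _ hh, _, mem_image_of_mem _ hl₁, _, mem_image_of_mem _ hl₂,
    hX.sdiff (hF m₁ hm₁) (hF m₂ hm₂)⟩

theorem injOn_sdiff {α : Type*} [DecidableEq α] {s : Finset α} {F : Finset (Finset α)}
    (hF : ∀ A ∈ F, A ⊆ s) :
    Set.InjOn (s \ ·) F := fun A hA B hB h => by
  rw [← Finset.sdiff_sdiff_eq_self (hF A hA), ← Finset.sdiff_sdiff_eq_self (hF B hB)]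
  exact congrArg (s \ ·) h

theorem image_sdiff_image_sdiff {α : Type*} [DecidableEq α] {s : Finset α}
    {F : Finset (Finset α)} (hF : ∀ A ∈ F, A ⊆ s) :
    (F.image (s \ ·)).image (s \ ·) = F := by
  rw [image_image]
  exact (image_congr fun A hA => Finset.sdiff_sdiff_eq_self (hF A hA)).trans image_id

theorem InducedSaturated.image_sdiff {n : ℕ} {F : Finset (Finset ℕ)}
    (hsat : InducedSaturated n posetX F) :
    InducedSaturated n posetX (F.image (Icc 1 n \ ·)) := by
  obtain ⟨hF, hfree, hadd⟩ := hsat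
  refine ⟨by simp, fun h => hfree ?_, fun S hS hSF => ?_⟩
  · rw [← image_sdiff_image_sdiff hF]
    exact h.image_sdiff (by simp)
  · have hcS : Icc 1 n \ S ∉ F := fun h =>
      hSF (mem_image.2 ⟨_, h, Finset.sdiff_sdiff_eq_self hS⟩)
    have := (hadd _ sdiff_subset hcS).image_sdiff (s := Icc 1 n)
      (forall_mem_insert _ _ _ |>.2 ⟨sdiff_subset, hF⟩)
    rwa [image_insert, Finset.sdiff_sdiff_eq_self hS] at this

def IsLow (F : Finset (Finset ℕ)) (A : Finset ℕ) : Prop :=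
  ∃ p ∈ F, ∃ q ∈ F, A ⊆ p ∧ A ⊆ q ∧ IncompRel (· ⊆ ·) p q

def IsHigh (F : Finset (Finset ℕ)) (A : Finset ℕ) : Prop :=
  ∃ p ∈ F, ∃ q ∈ F, p ⊆ A ∧ q ⊆ A ∧ IncompRel (· ⊆ ·) p q

section LowHigh

variable {F : Finset (Finset ℕ)} {A B : Finset ℕ}

theorem IsLow.mono (h : IsLow F A) (hBA : B ⊆ A) : IsLow F B :=
  let ⟨p, hp, q, hq, hAp, hAq, hpq⟩ := h
  ⟨p, hp, q, hq, hBA.trans hAp, hBA.trans hAq, hpq⟩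

theorem IsHigh.mono (h : IsHigh F A) (hAB : A ⊆ B) : IsHigh F B :=
  let ⟨p, hp, q, hq, hpA, hqA, hpq⟩ := h
  ⟨p, hp, q, hq, hpA.trans hAB, hqA.trans hAB, hpq⟩

theorem IsHigh.two_le_card (h : IsHigh F A) : 2 ≤ A.card := by
  obtain ⟨p, -, q, -, hpA, hqA, hpq, hqp⟩ := h
  obtain ⟨x, hxp, hxq⟩ := not_subset.1 hpq
  obtain ⟨y, hyq, hyp⟩ := not_subset.1 hqp
  exact one_lt_card.2 ⟨x, hpA hxp, y, hqA hyq, by rintro rfl; exact hxq hyq⟩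

theorem IsLow.two_le_card_sdiff {s : Finset ℕ} (h : IsLow F A) (hF : ∀ B ∈ F, B ⊆ s) :
    2 ≤ (s \ A).card := by
  obtain ⟨p, hp, q, hq, hAp, hAq, hpq, hqp⟩ := h
  obtain ⟨x, hxp, hxq⟩ := not_subset.1 hpq
  obtain ⟨y, hyq, hyp⟩ := not_subset.1 hqp
  exact one_lt_card.2 ⟨x, mem_sdiff.2 ⟨hF p hp hxp, fun hx => hxq (hAq hx)⟩,
    y, mem_sdiff.2 ⟨hF q hq hyq, fun hy => hyp (hAp hy)⟩, by rintro rfl; exact hxq hyq⟩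

theorem IsLow.image_sdiff {s : Finset ℕ} (h : IsLow F A) (hF : ∀ B ∈ F, B ⊆ s) :
    IsHigh (F.image (s \ ·)) (s \ A) := by
  obtain ⟨p, hp, q, hq, hAp, hAq, hpq, hqp⟩ := h
  exact ⟨_, mem_image_of_mem _ hp, _, mem_image_of_mem _ hq, sdiff_subset_sdiff_right s hAp,
    sdiff_subset_sdiff_right s hAq,
    fun h => hqp ((sdiff_subset_sdiff_iff_subset (hF p hp) (hF q hq)).1 h),
    fun h => hpq ((sdiff_subset_sdiff_iff_subset (hF q hq) (hF p hp)).1 h)⟩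

theorem not_isHigh_of_isLow (hfree : ¬ ContainsInduced posetX F) (hA : A ∈ F)
    (hlow : IsLow F A) : ¬ IsHigh F A := by
  obtain ⟨m₁, hm₁, m₂, hm₂, hAm₁, hAm₂, hm⟩ := hlow
  rintro ⟨l₁, hl₁, l₂, hl₂, hl₁A, hl₂A, hl⟩
  exact hfree (containsInduced_posetX_iff.2
    ⟨l₁, hl₁, l₂, hl₂, A, hA, m₁, hm₁, m₂, hm₂, hl, hl₁A, hl₂A, hAm₁, hAm₂, hm⟩)

theorem IsLow.subset_or_subset (hfree : ¬ ContainsInduced posetX F) (hA : A ∈ F)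
    (hlow : IsLow F A) {u v : Finset ℕ} (hu : u ∈ F) (hv : v ∈ F) (huA : u ⊆ A) (hvA : v ⊆ A) :
    u ⊆ v ∨ v ⊆ u := by
  by_contra! h
  exact not_isHigh_of_isLow hfree hA hlow ⟨u, hu, v, hv, huA, hvA, h⟩

end LowHigh

namespace InducedSaturated

variable {n : ℕ} {F : Finset (Finset ℕ)}

/-- The three cases say whether `S` is a leg, the hip or a top of the copy of `X` created by
adding `S`. -/
theorem role_of_not_mem (hsat : InducedSaturated n posetX F) {S : Finset ℕ} (hS : S ⊆ Icc 1 n)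
    (hSF : S ∉ F) :
    (∃ C ∈ F, ∃ w ∈ F, IncompRel (· ⊆ ·) C S ∧ C ⊆ w ∧ S ⊆ w ∧ IsLow F w) ∨
    (IsLow F S ∧ IsHigh F S) ∨
    (∃ C ∈ F, ∃ w ∈ F, IncompRel (· ⊆ ·) C S ∧ w ⊆ C ∧ w ⊆ S ∧ IsHigh F w) := by
  obtain ⟨l₁, hl₁, l₂, hl₂, h, hh, m₁, hm₁, m₂, hm₂, hX⟩ :=
    containsInduced_posetX_iff.1 (hsat.2.2 S hS hSF)
  obtain ⟨⟨h12, h21⟩, hl₁h, hl₂h, hhm₁, hhm₂, hm₁₂, hm₂₁⟩ := hX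
  beta_reduce at h12 h21 hm₁₂ hm₂₁
  have mem {x : Finset ℕ} (hx : x ∈ insert S F) (hne : x ≠ S) : x ∈ F :=
    mem_of_mem_insert_of_ne hx hne
  rcases eq_or_ne l₁ S with rfl | hl₁S
  · exact .inl ⟨l₂, mem hl₂ (by order), h, mem hh (by order), ⟨h21, h12⟩, hl₂h, hl₁h,
      m₁, mem hm₁ (by order), m₂, mem hm₂ (by order), hhm₁, hhm₂, hm₁₂, hm₂₁⟩
  rcases eq_or_ne l₂ S with rfl | hl₂S
  · exact .inl ⟨l₁, mem hl₁ hl₁S, h, mem hh (by order), ⟨h12, h21⟩, hl₁h, hl₂h,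
      m₁, mem hm₁ (by order), m₂, mem hm₂ (by order), hhm₁, hhm₂, hm₁₂, hm₂₁⟩
  rcases eq_or_ne h S with rfl | hhS
  · exact .inr (.inl ⟨⟨m₁, mem hm₁ (by order), m₂, mem hm₂ (by order), hhm₁, hhm₂, hm₁₂, hm₂₁⟩,
      ⟨l₁, mem hl₁ hl₁S, l₂, mem hl₂ hl₂S, hl₁h, hl₂h, h12, h21⟩⟩)
  have hhigh : IsHigh F h := ⟨l₁, mem hl₁ hl₁S, l₂, mem hl₂ hl₂S, hl₁h, hl₂h, h12, h21⟩
  rcases eq_or_ne m₁ S with rfl | hm₁S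
  · exact .inr (.inr ⟨m₂, mem hm₂ (by order), h, mem hh hhS, ⟨hm₂₁, hm₁₂⟩, hhm₂, hhm₁, hhigh⟩)
  rcases eq_or_ne m₂ S with rfl | hm₂S
  · exact .inr (.inr ⟨m₁, mem hm₁ hm₁S, h, mem hh hhS, ⟨hm₁₂, hm₂₁⟩, hhm₁, hhm₂, hhigh⟩)
  exact absurd (containsInduced_posetX_iff.2 ⟨l₁, mem hl₁ hl₁S, l₂, mem hl₂ hl₂S, h, mem hh hhS,
    m₁, mem hm₁ hm₁S, m₂, mem hm₂ hm₂S, ⟨h12, h21⟩, hl₁h, hl₂h, hhm₁, hhm₂, hm₁₂, hm₂₁⟩) hsat.2.1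

theorem empty_mem (hsat : InducedSaturated n posetX F) : ∅ ∈ F := by
  by_contra hF
  rcases hsat.role_of_not_mem (empty_subset _) hF with
    ⟨C, -, -, -, hC, -⟩ | ⟨-, hhigh⟩ | ⟨C, -, -, -, hC, -⟩
  · exact hC.2 (empty_subset C)
  · simpa using hhigh.two_le_card
  · exact hC.2 (empty_subset C)

theorem exists_incompRel (hsat : InducedSaturated n posetX F) (hn : 2 ≤ n) :
    ∃ p ∈ F, ∃ q ∈ F, IncompRel (· ⊆ ·) p q := by
  have of_not_mem {S : Finset ℕ} (hS : S ⊆ Icc 1 n) (hSF : S ∉ F) :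
      ∃ p ∈ F, ∃ q ∈ F, IncompRel (· ⊆ ·) p q := by
    rcases hsat.role_of_not_mem hS hSF with
      ⟨-, -, -, -, -, -, -, p, hp, q, hq, -, -, hpq⟩ | ⟨⟨p, hp, q, hq, -, -, hpq⟩, -⟩ |
      ⟨-, -, -, -, -, -, -, p, hp, q, hq, -, -, hpq⟩ <;>
    exact ⟨p, hp, q, hq, hpq⟩
  by_cases h₁ : {1} ∈ F
  · by_cases h₂ : {2} ∈ F
    · exact ⟨{1}, h₁, {2}, h₂, by decide, by decide⟩
    · exact of_not_mem (by simp; omega) h₂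
  · exact of_not_mem (by simp; omega) h₁

theorem isLow_empty (hsat : InducedSaturated n posetX F) (hn : 2 ≤ n) : IsLow F ∅ :=
  let ⟨p, hp, q, hq, hpq⟩ := hsat.exists_incompRel hn
  ⟨p, hp, q, hq, empty_subset p, empty_subset q, hpq⟩

theorem exists_isLow_mem (hsat : InducedSaturated n posetX F) (hn : 3 ≤ n) {i : ℕ}
    (hi : i ∈ Icc 1 n) : ∃ A ∈ F, IsLow F A ∧ i ∈ A := by
  by_contra! hno
  have small {S : Finset ℕ} (hS : S ⊆ Icc 1 n) (hSF : S ∉ F) (hiS : i ∈ S)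
      (hcard : S.card ≤ 2) : IsLow F S ∧ IsHigh F S := by
    rcases hsat.role_of_not_mem hS hSF with
      ⟨-, -, w, hw, -, -, hSw, hwlow⟩ | hhip | ⟨-, -, w, hw, -, -, hwS, hwhigh⟩
    · exact absurd (hSw hiS) (hno w hw hwlow)
    · exact hhip
    · have := card_lt_card (hwS.ssubset_of_ne (ne_of_mem_of_not_mem hw hSF))
      have := hwhigh.two_le_card
      omega
  have hsing : {i} ∈ F := by
    by_contra h
    simpa using (small (singleton_subset_iff.2 hi) h (mem_singleton_self i) (by simp)).2.two_le_card
  have hchain : ∀ p ∈ F, ∀ q ∈ F, i ∈ p → i ∈ q → p ⊆ q ∨ q ⊆ p := by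
    intro p hp q hq hip hiq
    by_contra! h
    exact hno {i} hsing ⟨p, hp, q, hq, singleton_subset_iff.2 hip, singleton_subset_iff.2 hiq, h⟩
      (mem_singleton_self i)
  obtain ⟨j, hj, hij⟩ : ∃ j ∈ Icc 1 n, {i, j} ∉ F := by
    by_contra! h
    obtain ⟨j₁, hj₁, j₂, hj₂, hj₁₂⟩ := one_lt_card.1 <| show 1 < ((Icc 1 n).erase i).card by
      rw [card_erase_of_mem hi, Nat.card_Icc]; omega
    rw [mem_erase] at hj₁ hj₂
    rcases hchain _ (h j₁ hj₁.2) _ (h j₂ hj₂.2) (mem_insert_self i _) (mem_insert_self i _) with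
      h | h
    · have := h (mem_insert_of_mem (mem_singleton_self j₁))
      simp only [mem_insert, mem_singleton] at this
      tauto
    · have := h (mem_insert_of_mem (mem_singleton_self j₂))
      simp only [mem_insert, mem_singleton] at this
      tauto
  obtain ⟨p, hp, q, hq, hip, hiq, hpq⟩ := (small (insert_subset hi (singleton_subset_iff.2 hj)) hij
    (mem_insert_self i _) card_le_two).1
  rcases hchain p hp q hq (hip (mem_insert_self i _)) (hiq (mem_insert_self i _)) with h | h
  exacts [hpq.1 h, hpq.2 h]

theorem exists_ssuperset_of_insert_not_mem (hsat : InducedSaturated n posetX F) {i : ℕ}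
    {P T : Finset ℕ} (hP : P ∈ F) (hT : T ∈ F) (hTlow : IsLow F T)
    (hPT : insert i P ⊆ T) (hS : insert i P ∉ F) :
    ∃ C ∈ F, P ⊂ C ∧ i ∉ C ∧ ∃ w ∈ F, IsLow F w ∧ insert i C ⊆ w := by
  have hfree := hsat.2.1
  rcases hsat.role_of_not_mem (hPT.trans (hsat.1 T hT)) hS with
    ⟨C, hC, w, hw, hCS, hCw, hSw, hwlow⟩ | ⟨-, hhigh⟩ | ⟨-, -, w, -, -, -, hwS, hwhigh⟩
  · have hPC : P ⊆ C :=
      (hwlow.subset_or_subset hfree hw hC hP hCw ((subset_insert i P).trans hSw)).resolve_left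
        fun h => hCS.1 (h.trans (subset_insert i P))
    refine ⟨C, hC, hPC.ssubset_of_ne ?_, fun hiC => hCS.2 (insert_subset hiC hPC), w, hw, hwlow,
      insert_subset (hSw (mem_insert_self i P)) hCw⟩
    rintro rfl
    exact hCS.1 (subset_insert i P)
  · exact absurd (hhigh.mono hPT) (not_isHigh_of_isLow hfree hT hTlow)
  · exact absurd (hwhigh.mono (hwS.trans hPT)) (not_isHigh_of_isLow hfree hT hTlow)

theorem exists_isLow_erase_mem (hsat : InducedSaturated n posetX F) (hn : 3 ≤ n) {i : ℕ}
    (hi : i ∈ Icc 1 n) : ∃ T ∈ F, IsLow F T ∧ i ∈ T ∧ T.erase i ∈ F := by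
  classical
  obtain ⟨A, hA, hAlow, hiA⟩ := hsat.exists_isLow_mem hn hi
  let good := F.filter fun P => i ∉ P ∧ ∃ T ∈ F, IsLow F T ∧ insert i P ⊆ T
  have hempty : ∅ ∈ good :=
    mem_filter.2 ⟨hsat.empty_mem, notMem_empty i, A, hA, hAlow, by simpa using hiA⟩
  obtain ⟨P, hPgood, hPmax⟩ := good.exists_max_image card ⟨∅, hempty⟩
  obtain ⟨hP, hiP, T, hT, hTlow, hPT⟩ := mem_filter.1 hPgood
  by_cases hS : insert i P ∈ F
  · exact ⟨insert i P, hS, hTlow.mono hPT, mem_insert_self i P, by rwa [erase_insert hiP]⟩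
  · obtain ⟨C, hC, hPC, hiC, hw⟩ :=
      hsat.exists_ssuperset_of_insert_not_mem hP hT hTlow hPT hS
    exact absurd (hPmax C (mem_filter.2 ⟨hC, hiC, hw⟩)) (card_lt_card hPC).not_ge

theorem exists_subset_card_isLow (hsat : InducedSaturated n posetX F) (hn : 3 ≤ n) :
    ∃ L ⊆ F, n + 1 ≤ L.card ∧ ∀ A ∈ L, IsLow F A := by
  classical
  choose! t ht using fun i (hi : i ∈ Icc 1 n) => hsat.exists_isLow_erase_mem hn hi
  have ht_inj : Set.InjOn t (Icc 1 n) := by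
    intro i hi j hj hij
    by_contra hne
    obtain ⟨hT, hTlow, hiT, hTi⟩ := ht i hi
    obtain ⟨-, -, hjT, hTj⟩ := ht j hj
    rw [← hij] at hjT hTj
    rcases hTlow.subset_or_subset hsat.2.1 hT hTi hTj (erase_subset _ _) (erase_subset _ _) with
      h | h
    · exact notMem_erase j _ (h (mem_erase.2 ⟨Ne.symm hne, hjT⟩))
    · exact notMem_erase i _ (h (mem_erase.2 ⟨hne, hiT⟩))
  have hempty : ∅ ∉ (Icc 1 n).image t := by
    rw [mem_image]
    rintro ⟨i, hi, h⟩
    exact notMem_empty i (h ▸ (ht i hi).2.2.1)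
  refine ⟨insert ∅ ((Icc 1 n).image t),
    insert_subset hsat.empty_mem (image_subset_iff.2 fun i hi => (ht i hi).1), ?_, ?_⟩
  · rw [card_insert_of_notMem hempty, card_image_of_injOn ht_inj, Nat.card_Icc]
    omega
  · simp only [forall_mem_insert, forall_mem_image]
    exact ⟨hsat.isLow_empty (by omega), fun i hi => (ht i hi).2.1⟩

theorem exists_subset_card_isHigh (hsat : InducedSaturated n posetX F) (hn : 3 ≤ n) :
    ∃ H ⊆ F, n + 1 ≤ H.card ∧ ∀ A ∈ H, IsHigh F A := by
  obtain ⟨L, hLG, hLcard, hLlow⟩ := hsat.image_sdiff.exists_subset_card_isLow hn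
  have hG : ∀ A ∈ F.image (Icc 1 n \ ·), A ⊆ Icc 1 n := by simp
  refine ⟨L.image (Icc 1 n \ ·), ?_, ?_, ?_⟩
  · rw [← image_sdiff_image_sdiff hsat.1]
    exact image_subset_image hLG
  · rwa [card_image_of_injOn ((injOn_sdiff hG).mono (coe_subset.2 hLG))]
  · rw [forall_mem_image]
    intro A hA
    simpa only [image_sdiff_image_sdiff hsat.1] using (hLlow A hA).image_sdiff hG

theorem two_mul_add_two_le_card (hsat : InducedSaturated n posetX F) (hn : 3 ≤ n) :
    2 * n + 2 ≤ F.card := by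
  obtain ⟨L, hLF, hL, hlow⟩ := hsat.exists_subset_card_isLow hn
  obtain ⟨H, hHF, hH, hhigh⟩ := hsat.exists_subset_card_isHigh hn
  have hdisj : Disjoint L H := disjoint_left.2 fun A hAL hAH =>
    not_isHigh_of_isLow hsat.2.1 (hLF hAL) (hlow A hAL) (hhigh A hAH)
  calc 2 * n + 2 ≤ L.card + H.card := by omega
    _ = (L ∪ H).card := (card_union_of_disjoint hdisj).symm
    _ ≤ F.card := card_le_card (union_subset hLF hHF)

end InducedSaturated

def extremeLayers (n : ℕ) : Finset (Finset ℕ) :=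
  ({0, 1, n - 1, n} : Finset ℕ).biUnion fun k => (Icc 1 n).powersetCard k

section ExtremeLayers

variable {n : ℕ}

theorem mem_extremeLayers {A : Finset ℕ} :
    A ∈ extremeLayers n ↔ A ⊆ Icc 1 n ∧ (A.card ≤ 1 ∨ n - 1 ≤ A.card) := by
  simp only [extremeLayers, mem_biUnion, mem_powersetCard, mem_insert, mem_singleton]
  constructor
  · rintro ⟨k, hk, hA, rfl⟩
    exact ⟨hA, by omega⟩
  · rintro ⟨hA, h⟩
    have := card_le_card hA
    rw [Nat.card_Icc] at this
    exact ⟨A.card, by omega, hA, rfl⟩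

theorem card_extremeLayers (hn : 3 ≤ n) : (extremeLayers n).card = 2 * n + 2 := by
  rw [extremeLayers, card_biUnion fun i _ j _ hij => pairwise_disjoint_powersetCard _ hij]
  rw [sum_insert (by simp; omega), sum_insert (by simp; omega), sum_insert (by simp; omega)]
  simp only [card_powersetCard, Nat.card_Icc, sum_singleton, Nat.add_sub_cancel,
    Nat.choose_zero_right, Nat.choose_one_right, Nat.choose_self,
    Nat.choose_symm_of_eq_add (by omega : n = n - 1 + 1)]
  omega

theorem not_containsInduced_extremeLayers : ¬ ContainsInduced posetX (extremeLayers n) := by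
  intro hX
  obtain ⟨l₁, hl₁, l₂, hl₂, h, hh, m₁, hm₁, m₂, hm₂, hl, hl₁h, hl₂h, hhm₁, hhm₂, hm⟩ :=
    containsInduced_posetX_iff.1 hX
  have hlow : IsLow (extremeLayers n) h := ⟨m₁, hm₁, m₂, hm₂, hhm₁, hhm₂, hm⟩
  have hhigh : IsHigh (extremeLayers n) h := ⟨l₁, hl₁, l₂, hl₂, hl₁h, hl₂h, hl⟩
  have h₁ := hhigh.two_le_card
  have h₂ := hlow.two_le_card_sdiff fun A hA => (mem_extremeLayers.1 hA).1
  obtain ⟨hsub, hcard⟩ := mem_extremeLayers.1 hh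
  rw [card_sdiff_of_subset hsub, Nat.card_Icc] at h₂
  omega

theorem extremeLayers_inducedSaturated : InducedSaturated n posetX (extremeLayers n) := by
  refine ⟨fun A hA => (mem_extremeLayers.1 hA).1, not_containsInduced_extremeLayers,
    fun S hS hSF => ?_⟩
  have hcard : 1 < S.card ∧ 1 < (Icc 1 n \ S).card := by
    rw [mem_extremeLayers, not_and, not_or] at hSF
    rw [card_sdiff_of_subset hS, Nat.card_Icc]
    have := hSF hS
    omega
  obtain ⟨a, ha, b, hb, hab⟩ := one_lt_card.1 hcard.1
  obtain ⟨c, hc, d, hd, hcd⟩ := one_lt_card.1 hcard.2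
  rw [mem_sdiff] at hc hd
  have hmem {A : Finset ℕ} (hA : A ∈ extremeLayers n) : A ∈ insert S (extremeLayers n) :=
    mem_insert_of_mem hA
  have hsingle {x : ℕ} (hx : x ∈ S) : {x} ∈ insert S (extremeLayers n) :=
    hmem (mem_extremeLayers.2 ⟨singleton_subset_iff.2 (hS hx), by simp⟩)
  have herase {x : ℕ} (hx : x ∈ Icc 1 n) : (Icc 1 n).erase x ∈ insert S (extremeLayers n) :=
    hmem (mem_extremeLayers.2 ⟨erase_subset _ _, by simp [card_erase_of_mem hx]⟩)
  refine containsInduced_posetX_iff.2 ⟨{a}, hsingle ha, {b}, hsingle hb, S, mem_insert_self _ _,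
    _, herase hc.1, _, herase hd.1, ⟨?_, ?_⟩, singleton_subset_iff.2 ha,
    singleton_subset_iff.2 hb, subset_erase.2 ⟨hS, hc.2⟩, subset_erase.2 ⟨hS, hd.2⟩, ⟨?_, ?_⟩⟩
  · exact fun h => hab (singleton_subset_singleton.1 h)
  · exact fun h => hab (singleton_subset_singleton.1 h).symm
  · exact fun h => notMem_erase d _ (h (mem_erase.2 ⟨Ne.symm hcd, hd.1⟩))
  · exact fun h => notMem_erase c _ (h (mem_erase.2 ⟨hcd, hc.1⟩))

end ExtremeLayers

/-- For `n ≥ 3`, `sat*(n, X) = 2n + 2`. -/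
theorem sat_star_x (n : ℕ) (hn : 3 ≤ n) : satStar n posetX = 2 * n + 2 := by
  have hmem : 2 * n + 2 ∈ {k | ∃ F, InducedSaturated n posetX F ∧ F.card = k} :=
    ⟨extremeLayers n, extremeLayers_inducedSaturated, card_extremeLayers hn⟩
  refine le_antisymm (Nat.sInf_le hmem) (le_csInf ⟨_, hmem⟩ ?_)
  rintro k ⟨F, hF, rfl⟩
  exact hF.two_mul_add_two_le_card hn
end
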